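/- Let y, w ∈ Área_n with Des(y) = Des(w), and let p ∈ W_n. Suppose that y·τ^{−1} ∈ Área_n and w·τ^{−1} ∈ Área_n for every τ with τ ≤_e p. Then Des(y·τ^{−1}) = Des(w·τ^{−1}) for every τ with τ ≤_e p. -/

import Mathlib

/-!
On `Área_n` (negative entries increasing, positive entries decreasing) one has
`w (i + 1) < w i` exactly when `w i > 0`, so `Des(w)` records only the signs of
`w 1, …, w (n - 1)`; the descents themselves are read off the type `B` inversion number
`ℓ(w) = inv(w) + nsp(w)`. Peel a suffix `τ ≤_e p` off one generator at a time: right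
multiplication by `t` or `s_i` moves these signs in the same way for `y τ⁻¹` and `w τ⁻¹`, except
that `s_{n-1}` brings the sign of the entry at position `n` to position `n - 1`. But when both
`v` and `v s_{n-1}` lie in `Área_n`, that sign is opposite to the sign of `v (n - 1)`, so it is
again the same for both.
-/

namespace BnPaper

/-- The generator `t`: swaps `1` and `-1`, fixing all other points. -/
def t : Equiv.Perm ℤ := Equiv.swap 1 (-1)

/-- The generator `s i`: swaps `i ↔ i+1` and `-i ↔ -(i+1)`. -/
def s (i : ℤ) : Equiv.Perm ℤ := Equiv.swap i (i + 1) * Equiv.swap (-i) (-(i + 1))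

/-- The descending product `s_j · s_{j-1} ⋯ s_i` (the identity when `i > j`). -/
def desc (i j : ℕ) : Equiv.Perm ℤ :=
  ((List.range (j + 1 - i)).map (fun k => s ((j : ℤ) - (k : ℤ)))).prod

/-- The ascending product `s_i · s_{i+1} ⋯ s_j` (the identity when `i > j`). -/
def asc (i j : ℕ) : Equiv.Perm ℤ :=
  ((List.range (j + 1 - i)).map (fun k => s ((i : ℤ) + (k : ℤ)))).prod

/-- `t_j = s_{j-1} ⋯ s_1 · t · s_1 ⋯ s_{j-1}`. -/
def tt (j : ℕ) : Equiv.Perm ℤ := desc 1 (j - 1) * t * (desc 1 (j - 1))⁻¹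

/-- The Coxeter generating set `{t, s_1, …, s_{n-1}}` of `W_n`. -/
def gens (n : ℕ) : Set (Equiv.Perm ℤ) :=
  insert t {g | ∃ i : ℕ, 1 ≤ i ∧ i ≤ n - 1 ∧ g = s (i : ℤ)}

/-- The Coxeter length: the least number of generators whose product is `w`. -/
noncomputable def len (n : ℕ) (w : Equiv.Perm ℤ) : ℕ :=
  sInf {k | ∃ l : List (Equiv.Perm ℤ), l.length = k ∧ (∀ g ∈ l, g ∈ gens n) ∧ l.prod = w}

/-- `W_n` realised as the signed permutations of `{-n, …, -1, 1, …, n}`: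
permutations of `ℤ` that are odd (`w(-i) = -w(i)`) and fix everything beyond `n` in
absolute value. -/
def W (n : ℕ) : Set (Equiv.Perm ℤ) :=
  {w | (∀ i : ℤ, w (-i) = -(w i)) ∧ ∀ i : ℤ, (n : ℤ) < |i| → w i = i}

/-- The right descent set `Des(w)`. -/
def Des (n : ℕ) (w : Equiv.Perm ℤ) : Set (Equiv.Perm ℤ) :=
  {g | g ∈ gens n ∧ len n (w * g) < len n w}

/-- The enhanced descent-set invariant
`ρ_m(w) = Des(w) ∪ {t_j : 2 ≤ j ≤ m, ℓ(w t_j) < ℓ(w)}`. -/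
def rho (n m : ℕ) (w : Equiv.Perm ℤ) : Set (Equiv.Perm ℤ) :=
  Des n w ∪ {g | ∃ j : ℕ, 2 ≤ j ∧ j ≤ m ∧ g = tt j ∧ len n (w * tt j) < len n w}

/-- `Área_n`: the negative entries of the row form appear in increasing order and
the positive entries in strictly decreasing order. -/
def Area (n : ℕ) : Set (Equiv.Perm ℤ) :=
  {w | w ∈ W n ∧ ∀ i j : ℤ, 1 ≤ i → i < j → j ≤ (n : ℤ) →
    (w i < 0 → w j < 0 → w i < w j) ∧ (0 < w i → 0 < w j → w j < w i)}

/-- The suffix relation `y ≤_e w`: `w = z · y` with `ℓ(w) = ℓ(z) + ℓ(y)`. -/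
def Suf (n : ℕ) (y w : Equiv.Perm ℤ) : Prop :=
  ∃ z, z ∈ W n ∧ w = z * y ∧ len n w = len n z + len n y

/-- `a_q = (t)(s_1 t)(s_2 s_1 t) ⋯ (s_{q-1} ⋯ s_1 t)`. -/
def aw (q : ℕ) : Equiv.Perm ℤ := ((List.range q).map (fun k => desc 1 k * t)).prod

/-- `b_q = (s_{q+1})(s_{q+2} s_{q+1}) ⋯ (s_{n-1} ⋯ s_{q+1})` (identity for `q ≥ n-1`). -/
def bw (n q : ℕ) : Equiv.Perm ℤ :=
  ((List.range (n - 1 - q)).map (fun k => desc (q + 1) (q + 1 + k))).prod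

/-- `σ_{n,q} = a_q · b_q`. -/
def sig (n q : ℕ) : Equiv.Perm ℤ := aw q * bw n q

/-- `p_{n,q} = (s_{n-q} ⋯ s_1)(s_{n-q+1} ⋯ s_2) ⋯ (s_{n-1} ⋯ s_q)`,
with `p_{n,0} = p_{n,n} = e`. -/
def p (n q : ℕ) : Equiv.Perm ℤ :=
  ((List.range q).map (fun m => desc (1 + m) (n - q + m))).prod

/-- `Π_{n,q} = (s_{n-q-1} ⋯ s_1) · t · p_{n,q}`. -/
def PiElt (n q : ℕ) : Equiv.Perm ℤ := desc 1 (n - q - 1) * t * p n q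

/-- `Υ(w) = {z ∈ Área_n : Des(z) = Des(w)}`. -/
def Ups (n : ℕ) (w : Equiv.Perm ℤ) : Set (Equiv.Perm ℤ) :=
  {z | z ∈ Area n ∧ Des n z = Des n w}

/-- The parabolic subgroup `W_J = ⟨s_1, …, s_{n-1}⟩`. -/
def WJ (n : ℕ) : Set (Equiv.Perm ℤ) :=
  ↑(Subgroup.closure {g | ∃ i : ℕ, 1 ≤ i ∧ i ≤ n - 1 ∧ g = s (i : ℤ)})

/-- The parabolic subgroup `W_K = ⟨t, s_1, …, s_{n-2}⟩`. -/
def WK (n : ℕ) : Set (Equiv.Perm ℤ) :=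
  ↑(Subgroup.closure (insert t {g | ∃ i : ℕ, 1 ≤ i ∧ i ≤ n - 2 ∧ g = s (i : ℤ)}))

/-- Knuth relation of type `I_k` : `w' = w · s_{i+1}` when
`w(i+1) < w(i) < w(i+2)` or `w(i+2) < w(i) < w(i+1)`. -/
def stepI (k : ℕ) (w w' : Equiv.Perm ℤ) : Prop :=
  ∃ i : ℤ, 1 ≤ i ∧ i ≤ (k : ℤ) - 2 ∧
    ((w (i + 1) < w i ∧ w i < w (i + 2)) ∨ (w (i + 2) < w i ∧ w i < w (i + 1))) ∧
    w' = w * s (i + 1)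

/-- Knuth relation of type `II_k` : `w' = w · s_i` when
`w(i+1) < w(i+2) < w(i)` or `w(i) < w(i+2) < w(i+1)`. -/
def stepII (k : ℕ) (w w' : Equiv.Perm ℤ) : Prop :=
  ∃ i : ℤ, 1 ≤ i ∧ i ≤ (k : ℤ) - 2 ∧
    ((w (i + 1) < w (i + 2) ∧ w (i + 2) < w i) ∨ (w i < w (i + 2) ∧ w (i + 2) < w (i + 1))) ∧
    w' = w * s i

/-- Knuth relation of type `III_k` : `w' = w · s_i` when `w(i)` and `w(i+1)` have
opposite signs. -/
def stepIII (k : ℕ) (w w' : Equiv.Perm ℤ) : Prop :=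
  ∃ i : ℤ, 1 ≤ i ∧ i ≤ (k : ℤ) - 1 ∧
    ((w i < 0 ∧ 0 < w (i + 1)) ∨ (w (i + 1) < 0 ∧ 0 < w i)) ∧
    w' = w * s i

lemma t_apply (x : ℤ) : t x = if x = 1 then -1 else if x = -1 then 1 else x :=
  Equiv.swap_apply_def _ _ _

lemma s_apply {i : ℤ} (hi : 1 ≤ i) (x : ℤ) :
    s i x = if x = i then i + 1 else if x = i + 1 then i
      else if x = -i then -(i + 1) else if x = -(i + 1) then -i else x := by
  simp only [s, Equiv.Perm.mul_apply, Equiv.swap_apply_def]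
  split_ifs <;> omega

lemma t_mul_self : t * t = 1 := Equiv.swap_mul_self _ _

lemma s_mul_self {i : ℤ} (hi : 1 ≤ i) : s i * s i = 1 := by
  ext x
  simp only [Equiv.Perm.mul_apply, Equiv.Perm.one_apply, s_apply hi]
  split_ifs <;> omega

lemma mul_s_apply {w : Equiv.Perm ℤ} {i x : ℤ} (hi : 1 ≤ i) (hx : 1 ≤ x) :
    (w * s i) x = w (Equiv.swap i (i + 1) x) := by
  rw [Equiv.Perm.mul_apply, s, Equiv.Perm.mul_apply,
    Equiv.swap_apply_of_ne_of_ne (a := -i) (by omega) (by omega)]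

lemma mul_t_apply {n : ℕ} {w : Equiv.Perm ℤ} (hw : w ∈ W n) {x : ℤ} (hx : 1 ≤ x) :
    (w * t) x = if x = 1 then -w 1 else w x := by
  rw [Equiv.Perm.mul_apply, t_apply]
  split_ifs <;> first | omega | simp_all [← hw.1]

lemma s_mem_gens {n : ℕ} {i : ℤ} (h1 : 1 ≤ i) (h2 : i + 1 ≤ n) : s i ∈ gens n :=
  Or.inr ⟨i.toNat, by omega, by omega, by rw [Int.toNat_of_nonneg (by omega)]⟩

lemma mul_self_of_mem_gens {n : ℕ} {g : Equiv.Perm ℤ} (hg : g ∈ gens n) : g * g = 1 := by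
  obtain rfl | ⟨i, hi, -, rfl⟩ := hg
  · exact t_mul_self
  · exact s_mul_self (by exact_mod_cast hi)

def signedPerms (n : ℕ) : Subgroup (Equiv.Perm ℤ) where
  carrier := W n
  mul_mem' {u v} hu hv :=
    ⟨fun i => by simp [hu.1, hv.1], fun i hi => by simp [hv.2 i hi, hu.2 i hi]⟩
  one_mem' := ⟨fun _ => rfl, fun _ _ => rfl⟩
  inv_mem' {w} hw :=
    ⟨fun i => by rw [Equiv.Perm.inv_eq_iff_eq, hw.1]; simp,
      fun i hi => by rw [Equiv.Perm.inv_eq_iff_eq, hw.2 i hi]⟩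

@[simp] lemma mem_signedPerms {n : ℕ} {w : Equiv.Perm ℤ} : w ∈ signedPerms n ↔ w ∈ W n := Iff.rfl

namespace W

variable {n : ℕ} {w : Equiv.Perm ℤ}

lemma apply_zero (hw : w ∈ W n) : w 0 = 0 := by
  have := hw.1 0
  simp only [neg_zero] at this
  omega

lemma apply_ne_zero (hw : w ∈ W n) {i : ℤ} (hi : i ≠ 0) : w i ≠ 0 :=
  fun h => hi (w.injective (h.trans (apply_zero hw).symm))

lemma abs_apply_le (hw : w ∈ W n) {i : ℤ} (hi : |i| ≤ n) : |w i| ≤ n := by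
  by_contra h
  have := w.injective (hw.2 (w i) (not_le.1 h))
  rw [this] at h
  omega

end W

lemma gens_subset_W {n : ℕ} (hn : 1 ≤ n) : gens n ⊆ W n := by
  rintro g (rfl | ⟨i, hi1, hi2, rfl⟩)
  · refine ⟨fun x => ?_, fun x hx => ?_⟩ <;> simp only [Int.abs_eq_natAbs, t_apply] at * <;>
      split_ifs <;> omega
  · have hi : 1 ≤ (i : ℤ) := by exact_mod_cast hi1
    refine ⟨fun x => ?_, fun x hx => ?_⟩ <;> simp only [Int.abs_eq_natAbs, s_apply hi] at * <;>
      split_ifs <;> omega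

noncomputable def pairs (n : ℕ) : Finset (ℤ × ℤ) :=
  (Finset.Icc (1 : ℤ) n ×ˢ Finset.Icc (1 : ℤ) n).filter fun q => q.1 ≤ q.2

def pairWeight (w : Equiv.Perm ℤ) (a b : ℤ) : ℕ :=
  (if a < b ∧ w b < w a then 1 else 0) + (if w a + w b < 0 then 1 else 0)

/-- The type `B` inversion number `inv(w) + nsp(w)`, which is the Coxeter length
(Björner–Brenti, *Combinatorics of Coxeter Groups*, §8.1). -/
noncomputable def invB (n : ℕ) (w : Equiv.Perm ℤ) : ℕ := ∑ q ∈ pairs n, pairWeight w q.1 q.2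

lemma mem_pairs {n : ℕ} {a b : ℤ} : (a, b) ∈ pairs n ↔ 1 ≤ a ∧ a ≤ b ∧ b ≤ n := by
  simp only [pairs, Finset.mem_filter, Finset.mem_product, Finset.mem_Icc]
  omega

section

variable {n : ℕ} {w : Equiv.Perm ℤ}

lemma invB_one : invB n 1 = 0 :=
  Finset.sum_eq_zero fun q hq => by
    obtain ⟨ha, hab, -⟩ := mem_pairs.1 hq
    have h1 : ¬ (q.1 < q.2 ∧ q.2 < q.1) := by omega
    have h2 : ¬ q.1 + q.2 < 0 := by omega
    simp [pairWeight, h1, h2]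

/-- Only the pair `(1, 1)` feels the sign change of `w 1`: for `b ≥ 2` the pair `(1, b)`
trades its inversion for a negative sum and vice versa. -/
lemma invB_mul_t_add (hn : 1 ≤ n) (hw : w ∈ W n) :
    invB n (w * t) + (if w 1 < 0 then 1 else 0) = invB n w + (if 0 < w 1 then 1 else 0) := by
  have h11 : ((1 : ℤ), (1 : ℤ)) ∈ pairs n := mem_pairs.2 ⟨le_rfl, le_rfl, by exact_mod_cast hn⟩
  have hrest : ∑ q ∈ (pairs n).erase (1, 1), pairWeight (w * t) q.1 q.2
      = ∑ q ∈ (pairs n).erase (1, 1), pairWeight w q.1 q.2 := by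
    refine Finset.sum_congr rfl fun ⟨a, b⟩ hq => ?_
    obtain ⟨hq, hab⟩ := Finset.mem_erase.1 hq
    obtain ⟨ha, hab, -⟩ := mem_pairs.1 hab
    have hb : 2 ≤ b := by
      by_contra
      exact hq (Prod.ext (by omega) (by omega))
    simp only [pairWeight, mul_t_apply hw ha, mul_t_apply hw (show 1 ≤ b by omega),
      if_neg (show b ≠ 1 by omega)]
    rcases eq_or_lt_of_le ha with rfl | ha
    · simp only [if_true]
      split_ifs <;> omega
    · simp only [if_neg (show a ≠ 1 by omega)]
  rw [invB, invB, ← Finset.add_sum_erase _ _ h11, ← Finset.add_sum_erase _ _ h11, hrest]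
  simp only [pairWeight, mul_t_apply hw le_rfl, if_true, lt_irrefl, false_and, if_false]
  split_ifs <;> omega

lemma invB_mul_s_add {i : ℤ} (h1 : 1 ≤ i) (h2 : i + 1 ≤ n) :
    invB n (w * s i) + (if w (i + 1) < w i then 1 else 0)
      = invB n w + (if w i < w (i + 1) then 1 else 0) := by
  have hi : (i, i + 1) ∈ pairs n := mem_pairs.2 ⟨h1, by omega, h2⟩
  set σ := Equiv.swap i (i + 1)
  have hrest : ∑ q ∈ (pairs n).erase (i, i + 1), pairWeight (w * s i) q.1 q.2
      = ∑ q ∈ (pairs n).erase (i, i + 1), pairWeight w q.1 q.2 := by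
    refine Finset.sum_equiv (σ.prodCongr σ) (fun ⟨a, b⟩ => ?_) (fun ⟨a, b⟩ hq => ?_)
    · simp only [Finset.mem_erase, mem_pairs, Equiv.prodCongr_apply, Prod.map, ne_eq,
        Prod.mk.injEq, σ, Equiv.swap_apply_def]
      split_ifs <;> omega
    · obtain ⟨hq, hab⟩ := Finset.mem_erase.1 hq
      obtain ⟨ha, hab, -⟩ := mem_pairs.1 hab
      simp only [pairWeight, mul_s_apply h1 ha, mul_s_apply h1 (ha.trans hab),
        Equiv.prodCongr_apply, Prod.map]
      simp only [ne_eq, Prod.mk.injEq, σ, Equiv.swap_apply_def] at hq ⊢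
      split_ifs <;> omega
  rw [invB, invB, ← Finset.add_sum_erase _ _ hi, ← Finset.add_sum_erase _ _ hi, hrest]
  simp only [pairWeight, mul_s_apply h1 h1, mul_s_apply h1 (by omega : (1 : ℤ) ≤ i + 1),
    Equiv.swap_apply_left, Equiv.swap_apply_right]
  split_ifs <;> omega

lemma invB_mul_t_lt_iff (hn : 1 ≤ n) (hw : w ∈ W n) : invB n (w * t) < invB n w ↔ w 1 < 0 := by
  have h := invB_mul_t_add hn hw
  split_ifs at h <;> omega

lemma invB_mul_s_lt_iff {i : ℤ} (h1 : 1 ≤ i) (h2 : i + 1 ≤ n) :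
    invB n (w * s i) < invB n w ↔ w (i + 1) < w i := by
  have h := invB_mul_s_add (w := w) h1 h2
  split_ifs at h <;> omega

lemma invB_mul_le (hn : 1 ≤ n) (hw : w ∈ W n) {g : Equiv.Perm ℤ} (hg : g ∈ gens n) :
    invB n (w * g) ≤ invB n w + 1 := by
  obtain rfl | ⟨i, hi1, hi2, rfl⟩ := hg
  · have h := invB_mul_t_add hn hw
    split_ifs at h <;> omega
  · have h := invB_mul_s_add (n := n) (w := w) (i := i) (by exact_mod_cast hi1) (by omega)
    split_ifs at h <;> omega

end

section

variable {n : ℕ} {w u v : Equiv.Perm ℤ}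

lemma eq_one_of_forall_lt (hw : w ∈ W n) (h1 : 0 < w 1)
    (hmono : ∀ i : ℤ, 1 ≤ i → i + 1 ≤ n → w i < w (i + 1)) : w = 1 := by
  have hgap : ∀ i : ℤ, 1 ≤ i → ∀ j, i ≤ j → j ≤ n → w i + (j - i) ≤ w j := by
    intro i hi j hij
    induction j, hij using Int.leInduction with
    | base => intro _; omega
    | succ j hij ih => intro hj; have := hmono j (by omega) hj; have := ih (by omega); omega
  have hwn : w n ≤ n := (abs_le.1 (W.abs_apply_le hw (by simp))).2
  have hfix : ∀ i : ℤ, 1 ≤ i → i ≤ n → w i = i := fun i hi1 hin => by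
    have := hgap 1 le_rfl i hi1 hin
    have := hgap i hi1 n hin le_rfl
    omega
  ext x
  rcases lt_trichotomy x 0 with hx | rfl | hx
  · by_cases hxn : (n : ℤ) < |x|
    · exact hw.2 x hxn
    · rw [← neg_neg x, hw.1, hfix (-x) (by omega) (by rw [abs_of_neg hx] at hxn; omega)]
      rfl
  · exact W.apply_zero hw
  · by_cases hxn : (n : ℤ) < |x|
    · exact hw.2 x hxn
    · exact hfix x hx (by rw [abs_of_pos hx] at hxn; omega)

lemma len_list_prod_le {l : List (Equiv.Perm ℤ)} (hl : ∀ g ∈ l, g ∈ gens n) :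
    len n l.prod ≤ l.length :=
  Nat.sInf_le ⟨l, rfl, hl, rfl⟩

lemma invB_list_prod_le (hn : 1 ≤ n) {l : List (Equiv.Perm ℤ)} (hl : ∀ g ∈ l, g ∈ gens n) :
    invB n l.prod ≤ l.length := by
  induction l using List.reverseRecOn with
  | nil => simp [invB_one]
  | append_singleton l g ih =>
    have hl' : ∀ x ∈ l, x ∈ gens n := fun x hx => hl x (List.mem_append_left _ hx)
    have hlW : l.prod ∈ W n :=
      (signedPerms n).list_prod_mem fun x hx => gens_subset_W hn (hl' x hx)
    have := invB_mul_le hn hlW (hl g (by simp))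
    have := ih hl'
    rw [List.prod_append, List.prod_singleton, List.length_append, List.length_singleton]
    omega

lemma exists_word_length_le_invB (hn : 1 ≤ n) (hw : w ∈ W n) :
    ∃ l : List (Equiv.Perm ℤ), (∀ g ∈ l, g ∈ gens n) ∧ l.prod = w ∧ l.length ≤ invB n w := by
  induction hk : invB n w using Nat.strong_induction_on generalizing w with
  | _ k ih =>
  by_cases hdes : ∃ g ∈ gens n, invB n (w * g) < invB n w
  · obtain ⟨g, hg, hlt⟩ := hdes
    obtain ⟨l, hl, hprod, hlen⟩ :=
      ih _ (hk ▸ hlt) ((signedPerms n).mul_mem hw (gens_subset_W hn hg)) rfl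
    refine ⟨l ++ [g], ?_, ?_, ?_⟩
    · simpa [or_imp, forall_and] using ⟨hl, hg⟩
    · rw [List.prod_append, List.prod_singleton, hprod, mul_assoc, mul_self_of_mem_gens hg,
        mul_one]
    · simp only [List.length_append, List.length_singleton]
      omega
  · push Not at hdes
    have h1 : 0 < w 1 := by
      have := (invB_mul_t_lt_iff hn hw).not.1 (not_lt.2 (hdes t (Or.inl rfl)))
      have := W.apply_ne_zero hw one_ne_zero
      omega
    have hmono : ∀ i : ℤ, 1 ≤ i → i + 1 ≤ n → w i < w (i + 1) := fun i hi1 hi2 => by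
      have := (invB_mul_s_lt_iff hi1 hi2).not.1 (not_lt.2 (hdes (s i) (s_mem_gens hi1 hi2)))
      have := w.injective.ne (show i ≠ i + 1 by omega)
      omega
    exact ⟨[], by simp, by simp [eq_one_of_forall_lt hw h1 hmono], by simp⟩

lemma exists_word_length_eq_len (hn : 1 ≤ n) (hw : w ∈ W n) :
    ∃ l : List (Equiv.Perm ℤ), l.length = len n w ∧ (∀ g ∈ l, g ∈ gens n) ∧ l.prod = w := by
  obtain ⟨l, hl, hprod, -⟩ := exists_word_length_le_invB hn hw
  exact Nat.sInf_mem (s := {k | ∃ l : List (Equiv.Perm ℤ), l.length = k ∧ (∀ g ∈ l, g ∈ gens n) ∧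
    l.prod = w}) ⟨_, l, rfl, hl, hprod⟩

lemma len_eq_invB (hn : 1 ≤ n) (hw : w ∈ W n) : len n w = invB n w := by
  obtain ⟨l, hl, hprod, hlen⟩ := exists_word_length_le_invB hn hw
  obtain ⟨m, hmlen, hm, hmprod⟩ := exists_word_length_eq_len hn hw
  have := hprod ▸ len_list_prod_le hl
  have := hmprod ▸ invB_list_prod_le hn hm
  omega

lemma len_mul_le (hn : 1 ≤ n) (hu : u ∈ W n) (hv : v ∈ W n) :
    len n (u * v) ≤ len n u + len n v := by
  obtain ⟨lu, hlu, hgu, rfl⟩ := exists_word_length_eq_len hn hu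
  obtain ⟨lv, hlv, hgv, rfl⟩ := exists_word_length_eq_len hn hv
  rw [← hlu, ← hlv, ← List.length_append, ← List.prod_append]
  exact len_list_prod_le (by simpa [or_imp, forall_and] using ⟨hgu, hgv⟩)

lemma len_mul_t_lt_iff (hn : 1 ≤ n) (hw : w ∈ W n) : len n (w * t) < len n w ↔ w 1 < 0 := by
  rw [len_eq_invB hn hw,
    len_eq_invB hn ((signedPerms n).mul_mem hw (gens_subset_W hn (Or.inl rfl))),
    invB_mul_t_lt_iff hn hw]

lemma len_mul_s_lt_iff (hn : 1 ≤ n) (hw : w ∈ W n) {i : ℤ} (h1 : 1 ≤ i) (h2 : i + 1 ≤ n) :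
    len n (w * s i) < len n w ↔ w (i + 1) < w i := by
  rw [len_eq_invB hn hw,
    len_eq_invB hn ((signedPerms n).mul_mem hw (gens_subset_W hn (s_mem_gens h1 h2))),
    invB_mul_s_lt_iff h1 h2]

end

def SameSigns (n : ℕ) (y w : Equiv.Perm ℤ) : Prop :=
  ∀ i : ℤ, 1 ≤ i → i + 1 ≤ n → (0 < y i ↔ 0 < w i)

section

variable {n : ℕ} {y w z : Equiv.Perm ℤ} {i : ℤ}

lemma apply_succ_lt_iff_pos (hz : z ∈ Area n) (h1 : 1 ≤ i) (h2 : i + 1 ≤ n) :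
    z (i + 1) < z i ↔ 0 < z i := by
  obtain ⟨hneg, hpos⟩ := hz.2 i (i + 1) h1 (by omega) h2
  have := W.apply_ne_zero hz.1 (show i ≠ 0 by omega)
  refine ⟨fun hlt => ?_, fun hi => ?_⟩
  · by_contra
    have := hneg (by omega) (by omega)
    omega
  · rcases (W.apply_ne_zero hz.1 (show i + 1 ≠ 0 by omega)).lt_or_gt with h | h
    · omega
    · exact hpos hi h

/-- Entries of equal sign are ordered in `Área_n`, and `s_i` reverses the order of `z i` and
`z (i + 1)`. -/
lemma pos_iff_apply_succ_neg_of_mul_s_mem (hz : z ∈ Area n) (hzs : z * s i ∈ Area n) (h1 : 1 ≤ i)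
    (h2 : i + 1 ≤ n) : 0 < z i ↔ z (i + 1) < 0 := by
  have h := apply_succ_lt_iff_pos hz h1 h2
  have h' := apply_succ_lt_iff_pos hzs h1 h2
  rw [mul_s_apply h1 h1, mul_s_apply h1 (by omega), Equiv.swap_apply_left,
    Equiv.swap_apply_right] at h'
  have := z.injective.ne (show i ≠ i + 1 by omega)
  have := W.apply_ne_zero hz.1 (show i + 1 ≠ 0 by omega)
  omega

lemma s_mem_Des_iff_pos (hn : 1 ≤ n) (hz : z ∈ Area n) (h1 : 1 ≤ i) (h2 : i + 1 ≤ n) :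
    s i ∈ Des n z ↔ 0 < z i := by
  change _ ∧ _ ↔ _
  rw [len_mul_s_lt_iff hn hz.1 h1 h2, apply_succ_lt_iff_pos hz h1 h2]
  exact and_iff_right (s_mem_gens h1 h2)

lemma t_mem_Des_iff (hn : 1 ≤ n) (hw : w ∈ W n) : t ∈ Des n w ↔ w 1 < 0 := by
  change _ ∧ _ ↔ _
  rw [len_mul_t_lt_iff hn hw]
  exact and_iff_right (Or.inl rfl)

lemma Des_eq_Des_iff (hn : 2 ≤ n) (hy : y ∈ Area n) (hw : w ∈ Area n) :
    Des n y = Des n w ↔ SameSigns n y w := by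
  refine ⟨fun h i h1 h2 => ?_, fun h => Set.ext fun g => ?_⟩
  · rw [← s_mem_Des_iff_pos (by omega) hy h1 h2, ← s_mem_Des_iff_pos (by omega) hw h1 h2, h]
  by_cases hg : g ∈ gens n
  · obtain rfl | ⟨i, hi1, hi2, rfl⟩ := hg
    · rw [t_mem_Des_iff (by omega) hy.1, t_mem_Des_iff (by omega) hw.1]
      have := h 1 le_rfl (by omega)
      have := W.apply_ne_zero hy.1 one_ne_zero
      have := W.apply_ne_zero hw.1 one_ne_zero
      omega
    · have h1 : 1 ≤ (i : ℤ) := by exact_mod_cast hi1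
      have h2 : (i : ℤ) + 1 ≤ n := by omega
      rw [s_mem_Des_iff_pos (by omega) hy h1 h2, s_mem_Des_iff_pos (by omega) hw h1 h2]
      exact h i h1 h2
  · exact iff_of_false (fun h' => hg h'.1) (fun h' => hg h'.1)

lemma SameSigns.mul_gen (h : SameSigns n y w) (hy : y ∈ Area n) (hw : w ∈ Area n)
    {g : Equiv.Perm ℤ} (hg : g ∈ gens n) (hyg : y * g ∈ Area n) (hwg : w * g ∈ Area n) :
    SameSigns n (y * g) (w * g) := by
  intro i h1 h2
  obtain rfl | ⟨j, hj1, hj2, rfl⟩ := hg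
  · rw [mul_t_apply hy.1 h1, mul_t_apply hw.1 h1]
    split_ifs with hi
    · have := h 1 le_rfl (by omega)
      have := W.apply_ne_zero hy.1 one_ne_zero
      have := W.apply_ne_zero hw.1 one_ne_zero
      omega
    · exact h i h1 h2
  · have hj1 : 1 ≤ (j : ℤ) := by exact_mod_cast hj1
    rw [mul_s_apply hj1 h1, mul_s_apply hj1 h1, Equiv.swap_apply_def]
    split_ifs with hij hij1
    · subst hij
      by_cases hlast : (j : ℤ) + 1 + 1 ≤ n
      · exact h _ (by omega) hlast
      have := pos_iff_apply_succ_neg_of_mul_s_mem hy hyg hj1 h2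
      have := pos_iff_apply_succ_neg_of_mul_s_mem hw hwg hj1 h2
      have := h j hj1 h2
      have := W.apply_ne_zero hy.1 (show (j : ℤ) + 1 ≠ 0 by omega)
      have := W.apply_ne_zero hw.1 (show (j : ℤ) + 1 ≠ 0 by omega)
      omega
    · exact h j hj1 (by omega)
    · exact h i h1 h2

end

lemma Suf.exists_gen_mul {n : ℕ} {τ pp : Equiv.Perm ℤ} (hn : 1 ≤ n) (hpp : pp ∈ W n)
    (hτ : Suf n τ pp) (hτ1 : τ ≠ 1) :
    ∃ g ∈ gens n, ∃ τ', τ = g * τ' ∧ Suf n τ' pp ∧ len n τ' < len n τ := by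
  obtain ⟨z, hz, rfl, hlen⟩ := hτ
  have hτW : τ ∈ W n := by
    simpa using (signedPerms n).mul_mem ((signedPerms n).inv_mem hz) hpp
  obtain ⟨_ | ⟨g, l⟩, hl, hgens, rfl⟩ := exists_word_length_eq_len hn hτW
  · exact absurd List.prod_nil hτ1
  have hg : g ∈ gens n := hgens g (by simp)
  have hgW : g ∈ W n := gens_subset_W hn hg
  have hlW : l.prod ∈ W n :=
    (signedPerms n).list_prod_mem fun x hx => gens_subset_W hn (hgens x (by simp [hx]))
  rw [List.prod_cons] at hl hlen ⊢
  rw [List.length_cons] at hl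
  have hl_len := len_list_prod_le fun x hx => hgens x (List.mem_cons_of_mem g hx)
  have hg_len : len n g ≤ 1 := by
    simpa using len_list_prod_le (n := n) (l := [g]) (by simpa using hg)
  have hτ_le := len_mul_le hn hgW hlW
  have hzg_le := len_mul_le hn hz hgW
  have hpp_le := len_mul_le hn ((signedPerms n).mul_mem hz hgW) hlW
  rw [mul_assoc] at hpp_le
  exact ⟨g, hg, l.prod, rfl,
    ⟨z * g, (signedPerms n).mul_mem hz hgW, (mul_assoc z g _).symm, by omega⟩, by omega⟩

theorem statement6 (n : ℕ) (hn : 2 ≤ n) (y w pp : Equiv.Perm ℤ)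
    (hy : y ∈ Area n) (hw : w ∈ Area n) (hpp : pp ∈ W n)
    (hDes : Des n y = Des n w)
    (hyA : ∀ τ, Suf n τ pp → y * τ⁻¹ ∈ Area n)
    (hwA : ∀ τ, Suf n τ pp → w * τ⁻¹ ∈ Area n) :
    ∀ τ, Suf n τ pp → Des n (y * τ⁻¹) = Des n (w * τ⁻¹) := by
  intro τ hτ
  rw [Des_eq_Des_iff hn (hyA τ hτ) (hwA τ hτ)]
  induction hk : len n τ using Nat.strong_induction_on generalizing τ with
  | _ k ih =>
  by_cases hτ1 : τ = 1
  · subst hτ1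
    simpa using (Des_eq_Des_iff hn hy hw).1 hDes
  obtain ⟨g, hg, τ', rfl, hτ', hlt⟩ := hτ.exists_gen_mul (by omega) hpp hτ1
  have hinv : ∀ v : Equiv.Perm ℤ, v * (g * τ')⁻¹ = v * τ'⁻¹ * g := fun v => by
    rw [mul_inv_rev, inv_eq_of_mul_eq_one_right (mul_self_of_mem_gens hg), mul_assoc]
  rw [hinv, hinv]
  exact (ih _ (hk ▸ hlt) τ' hτ' rfl).mul_gen (hyA τ' hτ') (hwA τ' hτ') hg
    (hinv y ▸ hyA _ hτ) (hinv w ▸ hwA _ hτ)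

end BnPaper
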